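/- arXiv:1510.01591 — 2 statements merged into one kernel-verified Lean document; each statement's English description precedes it below -/
import Mathlib

section
/- Let n = sl. If C is a quasi-cyclic code over R of length n with index l (i.e., a linear code with τ_{s,l}(C) = C), then its Gray image φ(C) ⊆ Z₃^{3n} is an l-quasi-cyclic code of index 3 of length 3n over Z₃, i.e., Γ(φ(C)) = φ(C). -/
/-- The ring `R = Z₃ + vZ₃ + v²Z₃ = Z₃[v]/(v³ - v)`, with elements written
`a + v*b + v²*c` for `a b c : ZMod 3` (stored as the three coordinates). -/
@[ext]
structure R3 : Type where
  a : ZMod 3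
  b : ZMod 3
  c : ZMod 3
  deriving DecidableEq

namespace R3

instance : Zero R3 := ⟨⟨0, 0, 0⟩⟩
instance : One R3 := ⟨⟨1, 0, 0⟩⟩
instance : Add R3 := ⟨fun x y => ⟨x.a + y.a, x.b + y.b, x.c + y.c⟩⟩
instance : Neg R3 := ⟨fun x => ⟨-x.a, -x.b, -x.c⟩⟩
/-- Multiplication induced by `v³ = v` :
`(a+vb+v²c)(a'+vb'+v²c') = aa' + v(ab'+a'b+bc'+b'c) + v²(ac'+a'c+bb'+cc')`. -/
instance : Mul R3 := ⟨fun x y =>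
  ⟨x.a * y.a,
   x.a * y.b + x.b * y.a + x.b * y.c + x.c * y.b,
   x.a * y.c + x.c * y.a + x.b * y.b + x.c * y.c⟩⟩

@[simp] lemma zero_a : (0 : R3).a = 0 := rfl
@[simp] lemma zero_b : (0 : R3).b = 0 := rfl
@[simp] lemma zero_c : (0 : R3).c = 0 := rfl
@[simp] lemma one_a : (1 : R3).a = 1 := rfl
@[simp] lemma one_b : (1 : R3).b = 0 := rfl
@[simp] lemma one_c : (1 : R3).c = 0 := rfl
@[simp] lemma add_a (x y : R3) : (x + y).a = x.a + y.a := rfl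
@[simp] lemma add_b (x y : R3) : (x + y).b = x.b + y.b := rfl
@[simp] lemma add_c (x y : R3) : (x + y).c = x.c + y.c := rfl
@[simp] lemma neg_a (x : R3) : (-x).a = -x.a := rfl
@[simp] lemma neg_b (x : R3) : (-x).b = -x.b := rfl
@[simp] lemma neg_c (x : R3) : (-x).c = -x.c := rfl
@[simp] lemma mul_a (x y : R3) : (x * y).a = x.a * y.a := rfl
@[simp] lemma mul_b (x y : R3) :
    (x * y).b = x.a * y.b + x.b * y.a + x.b * y.c + x.c * y.b := rfl
@[simp] lemma mul_c (x y : R3) :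
    (x * y).c = x.a * y.c + x.c * y.a + x.b * y.b + x.c * y.c := rfl

private lemma thm_add_assoc (x y z : R3) : x + y + z = x + (y + z) := by ext <;> simp <;> ring
private lemma thm_zero_add (x : R3) : 0 + x = x := by ext <;> simp
private lemma thm_add_zero (x : R3) : x + 0 = x := by ext <;> simp
private lemma thm_add_comm (x y : R3) : x + y = y + x := by ext <;> simp <;> ring
private lemma thm_mul_assoc (x y z : R3) : x * y * z = x * (y * z) := by ext <;> simp <;> ring
private lemma thm_one_mul (x : R3) : 1 * x = x := by ext <;> simp
private lemma thm_mul_one (x : R3) : x * 1 = x := by ext <;> simp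
private lemma thm_left_distrib (x y z : R3) : x * (y + z) = x * y + x * z := by ext <;> simp <;> ring
private lemma thm_right_distrib (x y z : R3) : (x + y) * z = x * z + y * z := by ext <;> simp <;> ring
private lemma thm_mul_comm (x y : R3) : x * y = y * x := by ext <;> simp <;> ring
private lemma thm_zero_mul (x : R3) : 0 * x = 0 := by ext <;> simp
private lemma thm_mul_zero (x : R3) : x * 0 = 0 := by ext <;> simp
private lemma thm_neg_add_cancel (x : R3) : -x + x = 0 := by ext <;> simp

instance : CommRing R3 where
  nsmul m x := ⟨m • x.a, m • x.b, m • x.c⟩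
  nsmul_zero x := by ext <;> exact AddMonoid.nsmul_zero _
  nsmul_succ m x := by ext <;> exact AddMonoid.nsmul_succ _ _
  zsmul m x := ⟨m • x.a, m • x.b, m • x.c⟩
  zsmul_zero' x := by ext <;> exact SubNegMonoid.zsmul_zero' _
  zsmul_succ' m x := by ext <;> exact SubNegMonoid.zsmul_succ' _ _
  zsmul_neg' m x := by ext <;> exact SubNegMonoid.zsmul_neg' _ _
  add_assoc := thm_add_assoc
  zero_add := thm_zero_add
  add_zero := thm_add_zero
  add_comm := thm_add_comm
  mul_assoc := thm_mul_assoc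
  one_mul := thm_one_mul
  mul_one := thm_mul_one
  left_distrib := thm_left_distrib
  right_distrib := thm_right_distrib
  mul_comm := thm_mul_comm
  zero_mul := thm_zero_mul
  mul_zero := thm_mul_zero
  neg_add_cancel := thm_neg_add_cancel

/-- The element `v` of `R = Z₃[v]/(v³-v)`. -/
def v : R3 := ⟨0, 1, 0⟩

/-- The natural inclusion `Z₃ → R`. -/
def iota : ZMod 3 →+* R3 where
  toFun t := ⟨t, 0, 0⟩
  map_one' := by ext <;> simp
  map_mul' x y := by ext <;> simp
  map_zero' := by ext <;> simp
  map_add' x y := by ext <;> simp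

instance : Algebra (ZMod 3) R3 := iota.toAlgebra

end R3

open R3 in
/-- The Gray map `φ : R → Z₃³`, `φ(a+vb+v²c) = (a, a+b+c, a+2b+c)`. -/
def gray (r : R3) : ZMod 3 × ZMod 3 × ZMod 3 :=
  (r.a, r.a + r.b + r.c, r.a + 2 * r.b + r.c)

/-- The Gray map extended blockwise to `φ : R^n → Z₃^{3n}`, where `Z₃^{3n}` is
identified with `Z₃^n × Z₃^n × Z₃^n` via the three length-`n` blocks. -/
def grayV {n : ℕ} (r : Fin n → R3) :
    (Fin n → ZMod 3) × (Fin n → ZMod 3) × (Fin n → ZMod 3) :=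
  (fun i => (r i).a,
   fun i => (r i).a + (r i).b + (r i).c,
   fun i => (r i).a + 2 * (r i).b + (r i).c)

/-- Hamming weight on `Z₃^{3n} = Z₃^n × Z₃^n × Z₃^n`. -/
def wtH {n : ℕ} (x : (Fin n → ZMod 3) × (Fin n → ZMod 3) × (Fin n → ZMod 3)) : ℕ :=
  hammingNorm x.1 + hammingNorm x.2.1 + hammingNorm x.2.2

/-- The Lee weight of an element of `R`: the Hamming weight of its Gray image. -/
def wtLee (r : R3) : ℕ :=
  (if r.a ≠ 0 then 1 else 0) + (if r.a + r.b + r.c ≠ 0 then 1 else 0) +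
    (if r.a + 2 * r.b + r.c ≠ 0 then 1 else 0)

/-- The Lee weight on `R^n`, extended additively. -/
def wtLeeV {n : ℕ} (x : Fin n → R3) : ℕ := ∑ i, wtLee (x i)

/-- The cyclic shift `σ(c₀,…,c_{n-1}) = (c_{n-1},c₀,…,c_{n-2})`. -/
def cyc {α : Type*} {n : ℕ} [NeZero n] (c : Fin n → α) : Fin n → α :=
  fun i => c (i - 1)

/-- The negacyclic shift `η(c₀,…,c_{n-1}) = (-c_{n-1},c₀,…,c_{n-2})`. -/
def nega {α : Type*} [Neg α] {n : ℕ} [NeZero n] (c : Fin n → α) : Fin n → α :=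
  fun i => if i = 0 then -c (i - 1) else c (i - 1)

/-- The `λ`-constacyclic shift `(c₀,…,c_{n-1}) ↦ (λc_{n-1},c₀,…,c_{n-2})`. -/
def consta {α : Type*} [Mul α] {n : ℕ} [NeZero n] (lam : α) (c : Fin n → α) : Fin n → α :=
  fun i => if i = 0 then lam * c (i - 1) else c (i - 1)

open Fin.NatCast in
/-- The quasi-cyclic shift `τ_{s,l}` of block length `l` on vectors of length `n = s*l`,
moving the last block of `l` coordinates to the front; equivalently, the cyclic shift
by `l` positions. -/
def shiftBy {α : Type*} {n : ℕ} [NeZero n] (l : ℕ) (c : Fin n → α) : Fin n → α :=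
  fun i => c (i - (l : Fin n))

/-- Apply a map to each of the three blocks of `Z₃^{3n} = Z₃^n × Z₃^n × Z₃^n`. -/
def blockMap {n : ℕ} (f : (Fin n → ZMod 3) → (Fin n → ZMod 3))
    (x : (Fin n → ZMod 3) × (Fin n → ZMod 3) × (Fin n → ZMod 3)) :
    (Fin n → ZMod 3) × (Fin n → ZMod 3) × (Fin n → ZMod 3) :=
  (f x.1, f x.2.1, f x.2.2)

/-- The Euclidean dual of a linear code over `R`. -/
def dualR {n : ℕ} (C : Submodule R3 (Fin n → R3)) : Submodule R3 (Fin n → R3) where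
  carrier := {x | ∀ y ∈ C, ∑ i, x i * y i = 0}
  add_mem' := by
    intro p q hp hq y hy
    simp only [Set.mem_setOf_eq] at *
    simp [Pi.add_apply, add_mul, Finset.sum_add_distrib, hp y hy, hq y hy]
  zero_mem' := by intro y hy; simp
  smul_mem' := by
    intro r p hp y hy
    simp only [Set.mem_setOf_eq] at *
    simp [Pi.smul_apply, smul_eq_mul, mul_assoc, ← Finset.mul_sum, hp y hy]

/-- The Euclidean dual of a ternary linear code. -/
def dualZ {n : ℕ} (C : Submodule (ZMod 3) (Fin n → ZMod 3)) :
    Submodule (ZMod 3) (Fin n → ZMod 3) where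
  carrier := {x | ∀ y ∈ C, ∑ i, x i * y i = 0}
  add_mem' := by
    intro p q hp hq y hy
    simp only [Set.mem_setOf_eq] at *
    simp [Pi.add_apply, add_mul, Finset.sum_add_distrib, hp y hy, hq y hy]
  zero_mem' := by intro y hy; simp
  smul_mem' := by
    intro r p hp y hy
    simp only [Set.mem_setOf_eq] at *
    simp [Pi.smul_apply, smul_eq_mul, mul_assoc, ← Finset.mul_sum, hp y hy]

/-- The Euclidean inner product on `Z₃^{3n} = Z₃^n × Z₃^n × Z₃^n`. -/
def inner3 {n : ℕ} (x y : (Fin n → ZMod 3) × (Fin n → ZMod 3) × (Fin n → ZMod 3)) : ZMod 3 :=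
  ∑ i, x.1 i * y.1 i + ∑ i, x.2.1 i * y.2.1 i + ∑ i, x.2.2 i * y.2.2 i

/-- The Euclidean dual (as a set) of a subset of `Z₃^{3n}`. -/
def dual3Set {n : ℕ} (S : Set ((Fin n → ZMod 3) × (Fin n → ZMod 3) × (Fin n → ZMod 3))) :
    Set ((Fin n → ZMod 3) × (Fin n → ZMod 3) × (Fin n → ZMod 3)) :=
  {x | ∀ y ∈ S, inner3 x y = 0}

/-- The first associated ternary code `C₁ = {a : ∃ b c, a+vb+v²c ∈ C}`. -/
def assoc1 {n : ℕ} (C : Set (Fin n → R3)) : Set (Fin n → ZMod 3) :=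
  {x | ∃ r ∈ C, ∀ i, x i = (r i).a}

/-- The second associated ternary code `C₂ = {a+b+c : a+vb+v²c ∈ C}`. -/
def assoc2 {n : ℕ} (C : Set (Fin n → R3)) : Set (Fin n → ZMod 3) :=
  {x | ∃ r ∈ C, ∀ i, x i = (r i).a + (r i).b + (r i).c}

/-- The third associated ternary code `C₃ = {a+2b+c : a+vb+v²c ∈ C}`. -/
def assoc3 {n : ℕ} (C : Set (Fin n → R3)) : Set (Fin n → ZMod 3) :=
  {x | ∃ r ∈ C, ∀ i, x i = (r i).a + 2 * (r i).b + (r i).c}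

/-- The idempotent `e₁ = 1 + 2v²` of `R`. -/
noncomputable def e1 : R3 := 1 + 2 * R3.v ^ 2
/-- The idempotent `e₂ = 2v + 2v²` of `R`. -/
noncomputable def e2 : R3 := 2 * R3.v + 2 * R3.v ^ 2
/-- The idempotent `e₃ = v + 2v²` of `R`. -/
noncomputable def e3 : R3 := R3.v + 2 * R3.v ^ 2

/-- Coordinatewise inclusion `Z₃^n → R^n`. -/
def emb {n : ℕ} (x : Fin n → ZMod 3) : Fin n → R3 := fun i => R3.iota (x i)

/-- The code `(1+2v²)C₁ ⊕ (2v+2v²)C₂ ⊕ (v+2v²)C₃ ⊆ R^n` built from three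
ternary codes `C₁, C₂, C₃ ⊆ Z₃^n`. -/
def tri {n : ℕ} (C₁ C₂ C₃ : Set (Fin n → ZMod 3)) : Set (Fin n → R3) :=
  {w | ∃ x ∈ C₁, ∃ y ∈ C₂, ∃ z ∈ C₃, w = e1 • emb x + e2 • emb y + e3 • emb z}

open Polynomial in
/-- The polynomial representation `(c₀,…,c_{n-1}) ↦ c₀ + c₁x + … + c_{n-1}x^{n-1}`
of a vector over `Z₃`. -/
noncomputable def toPolyZ {n : ℕ} (c : Fin n → ZMod 3) : Polynomial (ZMod 3) :=
  ∑ i : Fin n, Polynomial.C (c i) * Polynomial.X ^ (i : ℕ)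

open Polynomial in
/-- The polynomial representation of a vector over `R`. -/
noncomputable def toPolyR {n : ℕ} (c : Fin n → R3) : Polynomial R3 :=
  ∑ i : Fin n, Polynomial.C (c i) * Polynomial.X ^ (i : ℕ)

/-- The quotient map `Z₃[x] → Z₃[x]/(xⁿ - ε)`. -/
noncomputable def mkZ (n : ℕ) (ε : ZMod 3) :
    Polynomial (ZMod 3) →+*
      Polynomial (ZMod 3) ⧸ Ideal.span {Polynomial.X ^ n - Polynomial.C ε} :=
  Ideal.Quotient.mk _

/-- The quotient map `R[x] → R[x]/(xⁿ - ε)`. -/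
noncomputable def mkR (n : ℕ) (ε : R3) :
    Polynomial R3 →+* Polynomial R3 ⧸ Ideal.span {Polynomial.X ^ n - Polynomial.C ε} :=
  Ideal.Quotient.mk _

/-- `f` is the generator polynomial of the ternary cyclic (`ε = 1`) resp. negacyclic
(`ε = -1`) code `D` of length `n`: `f` is a monic divisor of `xⁿ - ε` and, under the
polynomial representation, `D` corresponds exactly to the ideal of `Z₃[x]/(xⁿ - ε)`
generated by `f`. -/
def IsGenPolyZ (n : ℕ) (ε : ZMod 3) (D : Set (Fin n → ZMod 3))
    (f : Polynomial (ZMod 3)) : Prop :=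
  f.Monic ∧ f ∣ (Polynomial.X ^ n - Polynomial.C ε) ∧
    {p | ∃ c ∈ D, p = mkZ n ε (toPolyZ c)} = ↑(Ideal.span {mkZ n ε f})

instance (a b : ℕ) [NeZero a] [NeZero b] : NeZero (a * b) :=
  ⟨Nat.mul_ne_zero (NeZero.ne a) (NeZero.ne b)⟩

theorem blockMap_shiftBy_grayV {n : ℕ} [NeZero n] (l : ℕ) (r : Fin n → R3) :
    blockMap (shiftBy l) (grayV r) = grayV (shiftBy l r) :=
  rfl

/-- If `C` is a quasi-cyclic code over `R` of length `n = sl` with index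
`l`, then `φ(C)` is an `l`-quasi-cyclic code of index 3 of length `3n` over `Z₃`,
i.e. `Γ(φ(C)) = φ(C)`. -/
theorem statement5 (s l : ℕ) [NeZero s] [NeZero l] (C : Submodule R3 (Fin (s * l) → R3))
    (hC : shiftBy l '' (C : Set (Fin (s * l) → R3)) = (C : Set (Fin (s * l) → R3))) :
    blockMap (shiftBy l) '' (grayV '' (C : Set (Fin (s * l) → R3))) =
      grayV '' (C : Set (Fin (s * l) → R3)) := by
  rw [Set.image_comm (blockMap_shiftBy_grayV l), hC]
end

section
/- Let λ be a unit in R and let C = (1+2v²)C₁ ⊕ (2v+2v²)C₂ ⊕ (v+2v²)C₃ be a linear code of length n over R, where C₁, C₂, C₃ are ternary linear codes of length n. Write λ₁ = λ(0), λ₂ = λ(1), λ₃ = λ(2) ∈ Z₃ for the images of λ under the three evaluations v ↦ 0, v ↦ 1, v ↦ 2 from R to Z₃ (each λᵢ is 1 or −1). Then C is a λ-constacyclic code over R if and only if, for i = 1, 2, 3, Cᵢ is a λᵢ-constacyclic ternary code, i.e., each Cᵢ is either a cyclic code or a negacyclic code of length n over Z₃. -/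
/-- The evaluation `R → Z₃` at `v = t`: `a + vb + v²c ↦ a + tb + t²c`. -/
def evalv (t : ZMod 3) (r : R3) : ZMod 3 := r.a + t * r.b + t ^ 2 * r.c

lemma Set.prodMap_image_prod_eq_self_iff {α β : Type*} {f : α → α} {g : β → β} {s : Set α}
    {t : Set β} (hs : s.Nonempty) (ht : t.Nonempty) :
    Prod.map f g '' s ×ˢ t = s ×ˢ t ↔ f '' s = s ∧ g '' t = t := by
  rw [Set.prodMap_image_prod]
  exact Set.prod_eq_prod_iff_of_nonempty ((hs.image f).prod (ht.image g))

lemma comp_consta {α β F : Type*} [Mul α] [Mul β] [FunLike F α β] [MulHomClass F α β]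
    {n : ℕ} [NeZero n] (φ : F) (lam : α) (c : Fin n → α) :
    φ ∘ consta lam c = consta (φ lam) (φ ∘ c) := by
  funext i
  by_cases hi : i = 0 <;> simp [consta, hi]

namespace R3

/-- `evalv t` is multiplicative because `t³ = t` in `Z₃`, matching `v³ = v`. -/
def evalvHom (t : ZMod 3) : R3 →+* ZMod 3 where
  toFun := evalv t
  map_one' := by simp [evalv]
  map_mul' x y := by
    simp only [evalv, mul_a, mul_b, mul_c]
    linear_combination (-(x.b * y.c + x.c * y.b + t * x.c * y.c)) * ZMod.pow_card t
  map_zero' := by simp [evalv]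
  map_add' x y := by simp only [evalv, add_a, add_b, add_c]; ring

lemma e1_eq : e1 = ⟨1, 0, 2⟩ := by
  ext <;> simp [e1, v, sq] <;> decide

lemma e2_eq : e2 = ⟨0, 2, 2⟩ := by
  ext <;> simp [e2, v, sq] <;> decide

lemma e3_eq : e3 = ⟨0, 1, 2⟩ := by
  ext <;> simp [e3, v, sq] <;> decide

@[simp] lemma iota_a (t : ZMod 3) : (iota t).a = t := rfl
@[simp] lemma iota_b (t : ZMod 3) : (iota t).b = 0 := rfl
@[simp] lemma iota_c (t : ZMod 3) : (iota t).c = 0 := rfl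

noncomputable def evalEquiv : R3 ≃ ZMod 3 × ZMod 3 × ZMod 3 where
  toFun r := (evalvHom 0 r, evalvHom 1 r, evalvHom 2 r)
  invFun x := e1 * iota x.1 + e2 * iota x.2.1 + e3 * iota x.2.2
  left_inv r := by
    ext <;> simp [evalvHom, e1_eq, e2_eq, e3_eq, evalv, -map_pow] <;> ring_nf <;> reduce_mod_char
  right_inv x := by
    ext <;> simp [evalvHom, e1_eq, e2_eq, e3_eq, evalv, -map_pow] <;> ring_nf <;> reduce_mod_char

end R3

open R3

noncomputable def evalVec {n : ℕ} :
    (Fin n → R3) ≃ (Fin n → ZMod 3) × (Fin n → ZMod 3) × (Fin n → ZMod 3) where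
  toFun w := (evalvHom 0 ∘ w, evalvHom 1 ∘ w, evalvHom 2 ∘ w)
  invFun x := e1 • emb x.1 + e2 • emb x.2.1 + e3 • emb x.2.2
  left_inv w := funext fun i => evalEquiv.left_inv (w i)
  right_inv x := by
    ext i
    · exact congrArg Prod.fst (evalEquiv.right_inv (x.1 i, x.2.1 i, x.2.2 i))
    · exact congrArg (Prod.fst ∘ Prod.snd) (evalEquiv.right_inv (x.1 i, x.2.1 i, x.2.2 i))
    · exact congrArg (Prod.snd ∘ Prod.snd) (evalEquiv.right_inv (x.1 i, x.2.1 i, x.2.2 i))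

lemma tri_eq_image_evalVec_symm {n : ℕ} (S₁ S₂ S₃ : Set (Fin n → ZMod 3)) :
    tri S₁ S₂ S₃ = evalVec.symm '' S₁ ×ˢ S₂ ×ˢ S₃ := by
  ext w
  constructor
  · rintro ⟨x, hx, y, hy, z, hz, rfl⟩
    exact ⟨(x, y, z), ⟨hx, hy, hz⟩, rfl⟩
  · rintro ⟨⟨x, y, z⟩, ⟨hx, hy, hz⟩, rfl⟩
    exact ⟨x, hx, y, hy, z, hz, rfl⟩

lemma evalVec_consta {n : ℕ} [NeZero n] (lam : R3) (w : Fin n → R3) :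
    evalVec (consta lam w) =
      Prod.map (consta (evalv 0 lam)) (Prod.map (consta (evalv 1 lam)) (consta (evalv 2 lam)))
        (evalVec w) := by
  simp only [evalVec, Equiv.coe_fn_mk, Prod.map, comp_consta]
  rfl

theorem statement18_general (n : ℕ) [NeZero n] (lam : R3)
    (C : Submodule R3 (Fin n → R3))
    (C₁ C₂ C₃ : Submodule (ZMod 3) (Fin n → ZMod 3))
    (hC : (C : Set (Fin n → R3)) = tri (C₁ : Set (Fin n → ZMod 3)) C₂ C₃) :
    consta lam '' (C : Set (Fin n → R3)) = (C : Set (Fin n → R3)) ↔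
      (consta (evalv 0 lam) '' (C₁ : Set (Fin n → ZMod 3)) = (C₁ : Set (Fin n → ZMod 3)) ∧
       consta (evalv 1 lam) '' (C₂ : Set (Fin n → ZMod 3)) = (C₂ : Set (Fin n → ZMod 3)) ∧
       consta (evalv 2 lam) '' (C₃ : Set (Fin n → ZMod 3)) = (C₃ : Set (Fin n → ZMod 3))) := by
  have hC' : evalVec '' (C : Set (Fin n → R3)) = (C₁ : Set (Fin n → ZMod 3)) ×ˢ
      (C₂ : Set (Fin n → ZMod 3)) ×ˢ (C₃ : Set (Fin n → ZMod 3)) := by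
    rw [hC, tri_eq_image_evalVec_symm, Equiv.image_symm_image]
  have hconj : evalVec '' (consta lam '' (C : Set (Fin n → R3))) =
      Prod.map (consta (evalv 0 lam)) (Prod.map (consta (evalv 1 lam)) (consta (evalv 2 lam))) ''
        (evalVec '' (C : Set (Fin n → R3))) := by
    simp only [Set.image_image, evalVec_consta]
  have h₁ : (C₁ : Set (Fin n → ZMod 3)).Nonempty := ⟨0, C₁.zero_mem⟩
  have h₂ : (C₂ : Set (Fin n → ZMod 3)).Nonempty := ⟨0, C₂.zero_mem⟩
  have h₃ : (C₃ : Set (Fin n → ZMod 3)).Nonempty := ⟨0, C₃.zero_mem⟩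
  rw [← Set.image_eq_image evalVec.injective, hconj, hC',
    Set.prodMap_image_prod_eq_self_iff h₁ (h₂.prod h₃), Set.prodMap_image_prod_eq_self_iff h₂ h₃]

/-- Let `λ` be a unit of `R` and `C = (1+2v²)C₁ ⊕ (2v+2v²)C₂ ⊕ (v+2v²)C₃`
a linear code of length `n` over `R` built from ternary codes `C₁, C₂, C₃`. With
`λ₁ = λ(0)`, `λ₂ = λ(1)`, `λ₃ = λ(2)` the images of `λ` under the evaluations
`v ↦ 0, 1, 2`, the code `C` is `λ`-constacyclic over `R` iff `Cᵢ` is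
`λᵢ`-constacyclic over `Z₃` for `i = 1, 2, 3` (each `λᵢ` being `1` or `-1`, i.e. each
`Cᵢ` is cyclic or negacyclic). -/
theorem statement18 (n : ℕ) [NeZero n] (lam : R3) (hlam : IsUnit lam)
    (C : Submodule R3 (Fin n → R3))
    (C₁ C₂ C₃ : Submodule (ZMod 3) (Fin n → ZMod 3))
    (hC : (C : Set (Fin n → R3)) = tri (C₁ : Set (Fin n → ZMod 3)) C₂ C₃) :
    consta lam '' (C : Set (Fin n → R3)) = (C : Set (Fin n → R3)) ↔
      (consta (evalv 0 lam) '' (C₁ : Set (Fin n → ZMod 3)) = (C₁ : Set (Fin n → ZMod 3)) ∧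
       consta (evalv 1 lam) '' (C₂ : Set (Fin n → ZMod 3)) = (C₂ : Set (Fin n → ZMod 3)) ∧
       consta (evalv 2 lam) '' (C₃ : Set (Fin n → ZMod 3)) = (C₃ : Set (Fin n → ZMod 3))) :=
  statement18_general n lam C C₁ C₂ C₃ hC
end
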